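/- arXiv:1912.03228 — 2 statements merged into one kernel-verified Lean document; each statement's English description precedes it below -/
import Mathlib

section
/- Let V be a countable-dimensional complex vector space, V_* ⊂ V^* with nondegenerate pairing, and suppose L = ⋂_{φ∈Φ} ker φ ⊊ M = ⋂_{φ∈Ψ} ker φ for subsets Ψ ⊊ Φ ⊂ V_*. Let F ≠ 0 be a weakly E-compatible subspace of V. If F ∩ M ⊄ L and F + M ≠ V, then there exists a subspace F' ⊂ V, E-commensurable with F, such that F' ∩ L = F ∩ L and F' ∩ M is a hyperplane in F ∩ M. -/
/-!
Choose `x ∈ F ∩ M` outside `L`, a functional `φ ∈ Φ` with `φ x ≠ 0`, and `v ∉ F + M`, and put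
`F' = (F ∩ ker φ) + ℂ v`. As `F = (F ∩ ker φ) ⊕ ℂ x`, passing from `F` to `F'` exchanges `x` for
`v`, which is seen inside `U = ℂ x + ℂ v`. Because `v ∉ F + M`, adjoining `v` does not change the
intersection with `M` (or with `L ⊆ M`), so `F' ∩ M = F ∩ M ∩ ker φ`, a hyperplane of `F ∩ M`
complemented by `x`, and `F' ∩ L = F ∩ L` since `L ⊆ ker φ`. Weak compatibility survives the
passage to `F ∩ ker φ` because `φ`, a finite combination of coordinate functionals, vanishes on all
but finitely many vectors of `E`.
-/

/-- A subspace `F` of `V` is weakly `E`-compatible if it contains a subspace spanned by a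
subset of the basis `E` which has finite codimension in `F`. -/
def WeaklyCompat {ι V : Type*} [AddCommGroup V] [Module ℂ V]
    (E : Module.Basis ι ℂ V) (F : Submodule ℂ V) : Prop :=
  ∃ S : Set ι, Submodule.span ℂ (⇑E '' S) ≤ F ∧
    FiniteDimensional ℂ (↥F ⧸ Submodule.comap F.subtype (Submodule.span ℂ (⇑E '' S)))

/-- `F'` is `E`-commensurable with `F`. -/
def CommensurableWith {ι V : Type*} [AddCommGroup V] [Module ℂ V]
    (E : Module.Basis ι ℂ V) (F F' : Submodule ℂ V) : Prop :=
  WeaklyCompat E F' ∧ ∃ U : Submodule ℂ V, FiniteDimensional ℂ ↥U ∧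
    F ⊔ U = F' ⊔ U ∧ Module.finrank ℂ ↥(F ⊓ U) = Module.finrank ℂ ↥(F' ⊓ U)

open Submodule

theorem Submodule.FG.exists_fg_map_eq_of_surjective {R M N : Type*} [Ring R]
    [AddCommGroup M] [Module R M] [AddCommGroup N] [Module R N] {f : M →ₗ[R] N}
    (hf : Function.Surjective f) {P : Submodule R N} (hP : P.FG) :
    ∃ G : Submodule R M, G.FG ∧ G.map f = P := by
  obtain ⟨t, rfl⟩ := hP
  refine ⟨span R (Function.surjInv hf '' t), fg_span (t.finite_toSet.image _), ?_⟩
  rw [map_span, ← Set.image_comp, (Function.rightInverse_surjInv hf).comp_eq_id, Set.image_id]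

section DivisionRing

variable {K V : Type*} [DivisionRing K] [AddCommGroup V] [Module K V]

theorem Submodule.finite_quotient_comap_subtype_iff {W F : Submodule K V} :
    Module.Finite K (F ⧸ W.comap F.subtype) ↔ ∃ G : Submodule K V, G.FG ∧ F ≤ W ⊔ G := by
  have hker : LinearMap.ker (W.mkQ ∘ₗ F.subtype) = W.comap F.subtype := by
    rw [LinearMap.ker_comp, ker_mkQ]
  have hrange : LinearMap.range (W.mkQ ∘ₗ F.subtype) = F.map W.mkQ := by
    rw [LinearMap.range_comp, range_subtype]
  rw [Module.Finite.equiv_iff ((quotEquivOfEq _ _ hker.symm).trans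
    ((W.mkQ ∘ₗ F.subtype).quotKerEquivRange.trans (LinearEquiv.ofEq _ _ hrange))),
    Module.Finite.iff_fg]
  constructor
  · intro hFG
    obtain ⟨G, hG, hGF⟩ := hFG.exists_fg_map_eq_of_surjective W.mkQ_surjective
    refine ⟨G, hG, ?_⟩
    rw [sup_comm, ← W.ker_mkQ, ← LinearMap.map_le_map_iff, hGF]
  · rintro ⟨G, hG, hFG⟩
    have : Module.Finite K (G.map W.mkQ) := Module.Finite.iff_fg.mpr (hG.map _)
    refine Module.Finite.iff_fg.mp (Submodule.finiteDimensional_of_le (S₂ := G.map W.mkQ) ?_)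
    rwa [LinearMap.map_le_map_iff, ker_mkQ, sup_comm]

end DivisionRing

section Field

variable {K V : Type*} [Field K] [AddCommGroup V] [Module K V]

theorem Submodule.span_singleton_inf_eq_bot {Q : Submodule K V} {v : V} (hv : v ∉ Q) :
    K ∙ v ⊓ Q = ⊥ := by
  rw [inf_comm, ← disjoint_iff, disjoint_span_singleton]
  exact fun h => absurd h hv

theorem Submodule.sup_span_singleton_inf_eq_of_notMem_sup {P N : Submodule K V} {v : V}
    (hv : v ∉ P ⊔ N) : (P ⊔ K ∙ v) ⊓ N = P ⊓ N := by
  refine le_antisymm (le_inf ?_ inf_le_right) (inf_le_inf_right _ le_sup_left)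
  calc (P ⊔ K ∙ v) ⊓ N ≤ (P ⊔ K ∙ v) ⊓ (P ⊔ N) := inf_le_inf_left _ le_sup_right
    _ = P ⊔ K ∙ v ⊓ (P ⊔ N) := sup_inf_assoc_of_le _ le_sup_left
    _ = P := by rw [span_singleton_inf_eq_bot hv, sup_bot_eq]

theorem Submodule.sup_span_singleton_inf_sup_span_singleton {P : Submodule K V} {x v : V}
    (hv : v ∉ P ⊔ K ∙ x) : (P ⊔ K ∙ x) ⊓ (K ∙ x ⊔ K ∙ v) = K ∙ x := by
  rw [inf_comm, sup_inf_assoc_of_le _ le_sup_right, span_singleton_inf_eq_bot hv, sup_bot_eq]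

theorem Submodule.inf_ker_sup_span_singleton {F : Submodule K V} {φ : Module.Dual K V} {x : V}
    (hxF : x ∈ F) (hx : φ x ≠ 0) : F ⊓ LinearMap.ker φ ⊔ K ∙ x = F := by
  rw [inf_sup_assoc_of_le _ ((span_singleton_le_iff_mem _ _).mpr hxF), sup_comm,
    LinearMap.span_singleton_sup_ker_eq_top φ hx, inf_top_eq]

theorem Module.Basis.finite_setOf_apply_ne_zero {ι : Type*} (E : Module.Basis ι K V)
    {φ : Module.Dual K V} (hφ : φ ∈ span K (Set.range E.coord)) : {i | φ (E i) ≠ 0}.Finite := by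
  obtain ⟨c, rfl⟩ := Finsupp.mem_span_range_iff_exists_finsupp.mp hφ
  refine c.support.finite_toSet.subset fun i hi => Finsupp.mem_support_iff.mpr ?_
  have hφi : (c.sum fun j a => a • E.coord j) (E i) = c i := by
    simp only [LinearMap.finsupp_sum_apply, LinearMap.smul_apply, Module.Basis.coord_apply,
      Module.Basis.repr_self, smul_eq_mul]
    rw [Finsupp.sum, Finset.sum_eq_single i
      (fun j _ hji => by rw [Finsupp.single_eq_of_ne hji, mul_zero])
      (fun hi => by rw [Finsupp.notMem_support_iff.mp hi, zero_mul]),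
      Finsupp.single_eq_same, mul_one]
  exact hφi ▸ hi

end Field

section WeaklyCompat

variable {ι V : Type*} [AddCommGroup V] [Module ℂ V] {E : Module.Basis ι ℂ V}

theorem weaklyCompat_iff {F : Submodule ℂ V} :
    WeaklyCompat E F ↔ ∃ S : Set ι, span ℂ (E '' S) ≤ F ∧
      ∃ G : Submodule ℂ V, G.FG ∧ F ≤ span ℂ (E '' S) ⊔ G := by
  simp only [WeaklyCompat, finite_quotient_comap_subtype_iff]

theorem WeaklyCompat.sup_of_fg {F U : Submodule ℂ V} (hF : WeaklyCompat E F) (hU : U.FG) :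
    WeaklyCompat E (F ⊔ U) := by
  obtain ⟨S, hSF, G, hG, hFG⟩ := weaklyCompat_iff.mp hF
  exact weaklyCompat_iff.mpr ⟨S, hSF.trans le_sup_left, G ⊔ U, hG.sup hU,
    sup_le (hFG.trans (sup_le_sup_left le_sup_left _)) (le_sup_of_le_right le_sup_right)⟩

theorem WeaklyCompat.inf_ker {F : Submodule ℂ V} {φ : Module.Dual ℂ V} (hF : WeaklyCompat E F)
    (hφ : φ ∈ span ℂ (Set.range E.coord)) : WeaklyCompat E (F ⊓ LinearMap.ker φ) := by
  obtain ⟨S, hSF, G, hG, hFG⟩ := weaklyCompat_iff.mp hF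
  set s := {i | φ (E i) ≠ 0}
  have hS : span ℂ (E '' S) ≤ span ℂ (E '' (S \ s)) ⊔ span ℂ (E '' s) := by
    rw [← span_union, ← Set.image_union]
    exact span_mono (Set.image_mono (Set.subset_sdiff_union S s))
  refine weaklyCompat_iff.mpr ⟨S \ s, span_le.mpr ?_, span ℂ (E '' s) ⊔ G,
    (fg_span ((E.finite_setOf_apply_ne_zero hφ).image _)).sup hG, ?_⟩
  · rintro _ ⟨i, ⟨hiS, his⟩, rfl⟩
    exact ⟨hSF (subset_span ⟨i, hiS, rfl⟩), not_not.mp his⟩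
  · calc F ⊓ LinearMap.ker φ ≤ span ℂ (E '' S) ⊔ G := inf_le_left.trans hFG
      _ ≤ span ℂ (E '' (S \ s)) ⊔ span ℂ (E '' s) ⊔ G := sup_le_sup_right hS G
      _ = span ℂ (E '' (S \ s)) ⊔ (span ℂ (E '' s) ⊔ G) := sup_assoc _ _ _

theorem WeaklyCompat.commensurableWith_sup_span_singleton {P : Submodule ℂ V} {x v : V}
    (hP : WeaklyCompat E P) (hx : x ∉ P ⊔ ℂ ∙ v) (hv : v ∉ P ⊔ ℂ ∙ x) :
    CommensurableWith E (P ⊔ ℂ ∙ x) (P ⊔ ℂ ∙ v) := by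
  have hx0 : x ≠ 0 := fun h => hx (h ▸ zero_mem _)
  have hv0 : v ≠ 0 := fun h => hv (h ▸ zero_mem _)
  refine ⟨hP.sup_of_fg (fg_span_singleton v), ℂ ∙ x ⊔ ℂ ∙ v, inferInstance, ?_, ?_⟩
  · rw [sup_assoc, sup_assoc, sup_eq_right.mpr le_sup_left, sup_eq_right.mpr le_sup_right]
  · rw [sup_span_singleton_inf_sup_span_singleton hv, sup_comm (ℂ ∙ x),
      sup_span_singleton_inf_sup_span_singleton hx, finrank_span_singleton hx0,
      finrank_span_singleton hv0]

end WeaklyCompat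

theorem stmt9_general {ι V : Type*} [AddCommGroup V] [Module ℂ V]
    (E : Module.Basis ι ℂ V) (Vs : Submodule ℂ (Module.Dual ℂ V))
    (hVs : Vs = Submodule.span ℂ (Set.range fun i => E.coord i))
    (Φ : Set (Module.Dual ℂ V)) (hΦ : Φ ⊆ (Vs : Set (Module.Dual ℂ V)))
    (L M : Submodule ℂ V)
    (hL : L = ⨅ φ ∈ Φ, LinearMap.ker φ)
    (hLM : L < M)
    (F : Submodule ℂ V) (hFwc : WeaklyCompat E F)
    (h1 : ¬ F ⊓ M ≤ L) (h2 : F ⊔ M ≠ ⊤) :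
    ∃ F' : Submodule ℂ V, CommensurableWith E F F' ∧
      F' ⊓ L = F ⊓ L ∧ F' ⊓ M ≤ F ⊓ M ∧
      ∃ w ∈ F ⊓ M, w ∉ F' ⊓ M ∧ (F' ⊓ M) ⊔ Submodule.span ℂ {w} = F ⊓ M := by
  obtain ⟨x, hxFM, hxL⟩ := SetLike.not_le_iff_exists.mp h1
  obtain ⟨φ, hφΦ, hφx⟩ : ∃ φ ∈ Φ, φ x ≠ 0 := by simpa [hL] using hxL
  obtain ⟨v, hv⟩ := SetLike.exists_not_mem_of_ne_top _ h2 rfl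
  have hLφ : L ≤ LinearMap.ker φ := hL ▸ biInf_le _ hφΦ
  set K := F ⊓ LinearMap.ker φ
  have hKM : v ∉ K ⊔ M := fun h => hv (sup_le_sup_right inf_le_left M h)
  have hF'M : (K ⊔ ℂ ∙ v) ⊓ M = K ⊓ M := sup_span_singleton_inf_eq_of_notMem_sup hKM
  have hF'L : (K ⊔ ℂ ∙ v) ⊓ L = F ⊓ L := by
    rw [sup_span_singleton_inf_eq_of_notMem_sup fun h => hKM (sup_le_sup_left hLM.le K h),
      inf_assoc, inf_eq_right.mpr hLφ]
  have hxK : x ∉ K := fun h => hφx h.2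
  have hFx : K ⊔ ℂ ∙ x = F := inf_ker_sup_span_singleton hxFM.1 hφx
  have hxF' : x ∉ K ⊔ ℂ ∙ v := fun h => hxK (hF'M ▸ ⟨h, hxFM.2⟩ : x ∈ K ⊓ M).1
  have hvF : v ∉ K ⊔ ℂ ∙ x := fun h => hv (mem_sup_left (hFx ▸ h))
  have hKwc : WeaklyCompat E K := hFwc.inf_ker (hVs ▸ hΦ hφΦ)
  refine ⟨K ⊔ ℂ ∙ v, hFx ▸ hKwc.commensurableWith_sup_span_singleton hxF' hvF, hF'L, ?_, x, hxFM,
    ?_, ?_⟩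
  · exact hF'M ▸ inf_le_inf_right M inf_le_left
  · exact hF'M ▸ fun h => hxK h.1
  · rw [hF'M, inf_right_comm, inf_ker_sup_span_singleton hxFM hφx]

/-- With `L = ⋂_{φ∈Φ} ker φ ⊊ M = ⋂_{φ∈Ψ} ker φ` for `Ψ ⊊ Φ ⊂ V_*`, and
`F ≠ 0` weakly `E`-compatible with `F ∩ M ⊄ L` and `F + M ≠ V`, there is `F'`
`E`-commensurable with `F` such that `F' ∩ L = F ∩ L` and `F' ∩ M` is a hyperplane
in `F ∩ M`. -/
theorem stmt9 {ι V : Type*} [Countable ι] [AddCommGroup V] [Module ℂ V]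
    (E : Module.Basis ι ℂ V) (Vs : Submodule ℂ (Module.Dual ℂ V))
    (hVs : Vs = Submodule.span ℂ (Set.range fun i => E.coord i))
    (Φ Ψ : Set (Module.Dual ℂ V)) (hΨΦ : Ψ ⊂ Φ) (hΦ : Φ ⊆ (Vs : Set (Module.Dual ℂ V)))
    (L M : Submodule ℂ V)
    (hL : L = ⨅ φ ∈ Φ, LinearMap.ker φ) (hM : M = ⨅ φ ∈ Ψ, LinearMap.ker φ)
    (hLM : L < M)
    (F : Submodule ℂ V) (hF0 : F ≠ ⊥) (hFwc : WeaklyCompat E F)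
    (h1 : ¬ F ⊓ M ≤ L) (h2 : F ⊔ M ≠ ⊤) :
    ∃ F' : Submodule ℂ V, CommensurableWith E F F' ∧
      F' ⊓ L = F ⊓ L ∧ F' ⊓ M ≤ F ⊓ M ∧
      ∃ w ∈ F ⊓ M, w ∉ F' ⊓ M ∧ (F' ⊓ M) ⊔ Submodule.span ℂ {w} = F ⊓ M :=
  stmt9_general E Vs hVs Φ hΦ L M hL hLM F hFwc h1 h2
end

section
/- Let V be a countable-dimensional complex vector space, E a basis, and F a subspace of V. Then F is weakly E-compatible (i.e. the chain {0 ⊂ F ⊂ V} is compatible with some basis differing from E by finitely many vectors) if and only if F contains a finite-codimensional subspace of F spanned by a subset of E, i.e. there exists I ⊂ E with span(I) ⊆ F and dim F / span(I) < ∞. -/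
/-!
Put `G = span (E '' S)`. That `G ≤ F` has finite codimension in `F` means `F = G ⊔ W` with `W`
finite-dimensional. If `F` is spanned by `E' '' S`, the finitely many vectors of `E' '' S`
outside `range E` span such a `W`. Conversely, projecting `W` onto `span (E '' Sᶜ)` along `G`
does not change `G ⊔ W`, so we may take `W` spanned by a finite independent set `s` whose
vectors have no `S`-coordinates. Extending `s` to a basis by vectors of `E` keeps every `E j`
whose coordinate vanishes on all of `s`; the new basis thus contains `E '' S ∪ s` and omits
only finitely many `E j`.
-/

open Set Submodule

section

variable {K V ι : Type*} [DivisionRing K] [AddCommGroup V] [Module K V]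

theorem Submodule.finiteDimensional_quotient_comap_subtype_iff {G F : Submodule K V}
    (hGF : G ≤ F) :
    FiniteDimensional K (F ⧸ comap F.subtype G) ↔
      ∃ W : Submodule K V, FiniteDimensional K W ∧ G ⊔ W = F := by
  constructor
  · intro hfd
    obtain ⟨C, hC⟩ := (comap F.subtype G).exists_isCompl
    have : FiniteDimensional K C := (quotientEquivOfIsCompl _ C hC).finiteDimensional
    refine ⟨C.map F.subtype, inferInstance, ?_⟩
    have hG : (comap F.subtype G).map F.subtype = G := by
      rw [map_comap_subtype, inf_eq_right.mpr hGF]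
    rw [← hG, ← map_sup, hC.sup_eq_top, map_subtype_top]
  · rintro ⟨W, hW, rfl⟩
    rw [sup_comm]
    exact (LinearMap.quotientInfEquivSupQuotient W G).finiteDimensional

theorem Submodule.sup_map_eq_of_sub_mem {R M : Type*} [Ring R] [AddCommGroup M] [Module R M]
    {G : Submodule R M} {f : M →ₗ[R] M} (hf : ∀ x, x - f x ∈ G) (W : Submodule R M) :
    G ⊔ W.map f = G ⊔ W := by
  refine le_antisymm (sup_le le_sup_left ?_) (sup_le le_sup_left ?_)
  · rintro _ ⟨x, hx, rfl⟩
    rw [show f x = x - (x - f x) by abel]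
    exact sub_mem (mem_sup_right hx) (mem_sup_left (hf x))
  · intro x hx
    rw [show x = (x - f x) + f x by abel]
    exact add_mem (mem_sup_left (hf x)) (mem_sup_right (mem_map_of_mem hx))

theorem Submodule.exists_finite_linearIndepOn_sup_eq {G C : Submodule K V} (h : IsCompl G C)
    (W : Submodule K V) [FiniteDimensional K W] :
    ∃ s ⊆ (C : Set V), s.Finite ∧ LinearIndepOn K id s ∧ G ⊔ span K s = G ⊔ W := by
  set π := C.projection G h.symm
  obtain ⟨T, hTfin, hT⟩ := fg_def.mp ((Module.Finite.iff_fg.mp ‹_›).map π)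
  obtain ⟨s, hsT, hspan, hs⟩ := exists_linearIndependent K T
  refine ⟨s, ?_, hTfin.subset hsT, hs, ?_⟩
  · have hTC : span K T ≤ C := hT ▸ (LinearMap.map_le_range.trans (range_projection h.symm).le)
    exact hsT.trans (subset_span.trans hTC)
  · rw [hspan, hT, sup_map_eq_of_sub_mem (sub_projection_mem h.symm)]

theorem Module.Basis.apply_mem_of_forall_repr_eq_zero {R M : Type*} [Semiring R]
    [Nontrivial R] [AddCommMonoid M] [Module R M] (E : Basis ι R M) {s b : Set M} {j : ι}
    (hb : b ⊆ s ∪ range E) (hj : E j ∈ span R b) (hs : ∀ x ∈ s, E.repr x j = 0) :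
    E j ∈ b := by
  by_contra hjb
  have hb_ker : b ⊆ LinearMap.ker (E.coord j) := by
    intro x hx
    rcases hb hx with hxs | ⟨i, rfl⟩
    · exact hs x hxs
    · have hij : i ≠ j := by rintro rfl; exact hjb hx
      simp [hij]
  simpa using span_le.mpr hb_ker hj

theorem Module.Basis.exists_basis_of_linearIndepOn_subset_span_compl (E : Basis ι K V)
    (S : Set ι) {s : Set V} (hs : LinearIndepOn K id s) (hsfin : s.Finite)
    (hsS : s ⊆ span K (E '' Sᶜ)) :
    ∃ E' : Basis ι K V, (range E' \ range E).Finite ∧ (range E \ range E').Finite ∧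
      E '' S ∪ s ⊆ range E' := by
  have ht : ⊤ ≤ span K (s ∪ range E) := by
    rw [span_union, E.span_eq]
    exact le_sup_right
  set B := Basis.extendLe hs subset_union_left ht
  have hB : range B ⊆ s ∪ range E := Basis.extendLe_subset hs subset_union_left ht
  have hEB : ∀ j, (∀ x ∈ s, E.repr x j = 0) → E j ∈ range B := fun j hj =>
    E.apply_mem_of_forall_repr_eq_zero hB (B.span_eq ▸ mem_top) hj
  refine ⟨B.reindex (B.indexEquiv E), ?_, ?_, ?_⟩ <;> rw [range_reindex]
  · exact hsfin.subset fun x hx => (hB hx.1).resolve_right hx.2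
  · refine ((hsfin.biUnion fun x _ => (E.repr x).support.finite_toSet).image E).subset ?_
    rintro _ ⟨⟨j, rfl⟩, hj⟩
    obtain ⟨x, hx, hxj⟩ : ∃ x ∈ s, E.repr x j ≠ 0 := by
      by_contra! h
      exact hj (hEB j h)
    exact ⟨j, mem_biUnion hx (Finsupp.mem_support_iff.mpr hxj), rfl⟩
  · refine union_subset ?_ (Basis.subset_extendLe hs subset_union_left ht)
    rintro _ ⟨j, hj, rfl⟩
    refine hEB j fun x hx => Finsupp.notMem_support_iff.mp fun hjx => ?_
    exact E.mem_span_image.mp (hsS hx) hjx hj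

end

theorem stmt19_general {ι V : Type*} [AddCommGroup V] [Module ℂ V]
    (E : Module.Basis ι ℂ V) (F : Submodule ℂ V) :
    (∃ E' : Module.Basis ι ℂ V,
      (Set.range ⇑E' \ Set.range ⇑E).Finite ∧ (Set.range ⇑E \ Set.range ⇑E').Finite ∧
      ∃ S : Set ι, F = Submodule.span ℂ (⇑E' '' S)) ↔
    (∃ S : Set ι, Submodule.span ℂ (⇑E '' S) ≤ F ∧
      FiniteDimensional ℂ (↥F ⧸ Submodule.comap F.subtype (Submodule.span ℂ (⇑E '' S)))) := by
  constructor
  · rintro ⟨E', hfin, -, S, rfl⟩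
    have hle : span ℂ (E '' (E ⁻¹' (E' '' S))) ≤ span ℂ (E' '' S) :=
      span_mono (image_preimage_subset _ _)
    refine ⟨E ⁻¹' (E' '' S), hle, (finiteDimensional_quotient_comap_subtype_iff hle).mpr
      ⟨span ℂ (E' '' S \ range E), ?_, ?_⟩⟩
    · exact FiniteDimensional.span_of_finite ℂ
        (hfin.subset (sdiff_subset_sdiff_left (image_subset_range _ _)))
    · rw [image_preimage_eq_inter_range, ← span_union, inter_union_sdiff]
  · rintro ⟨S, hle, hfd⟩
    obtain ⟨W, hW, rfl⟩ := (finiteDimensional_quotient_comap_subtype_iff hle).mp hfd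
    obtain ⟨s, hsS, hsfin, hs, hsW⟩ := exists_finite_linearIndepOn_sup_eq
      (E.linearIndependent.isCompl_span_image E.span_eq isCompl_compl) W
    obtain ⟨E', h₁, h₂, hsub⟩ :=
      E.exists_basis_of_linearIndepOn_subset_span_compl S hs hsfin hsS
    refine ⟨E', h₁, h₂, E' ⁻¹' (E '' S ∪ s), ?_⟩
    rw [image_preimage_eq_of_subset hsub, span_union, hsW]

/-- A subspace `F` of a countable-dimensional complex vector space with
basis `E` is weakly `E`-compatible (i.e. spanned by a subset of some basis differing from `E`
by finitely many vectors) if and only if `F` contains a subspace of finite codimension in `F`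
which is spanned by a subset of `E`. -/
theorem stmt19 {ι V : Type*} [Countable ι] [AddCommGroup V] [Module ℂ V]
    (E : Module.Basis ι ℂ V) (F : Submodule ℂ V) :
    (∃ E' : Module.Basis ι ℂ V,
      (Set.range ⇑E' \ Set.range ⇑E).Finite ∧ (Set.range ⇑E \ Set.range ⇑E').Finite ∧
      ∃ S : Set ι, F = Submodule.span ℂ (⇑E' '' S)) ↔
    (∃ S : Set ι, Submodule.span ℂ (⇑E '' S) ≤ F ∧
      FiniteDimensional ℂ (↥F ⧸ Submodule.comap F.subtype (Submodule.span ℂ (⇑E '' S)))) :=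
  stmt19_general E F
end
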